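/- arXiv:1711.11066 — 5 statements merged into one kernel-verified Lean document; each statement's English description precedes it below -/
import Mathlib

section
/- Suppose a classifier C satisfies ε-fair treatment and ε-predictive parity with respect to a classification context P. Then for any two groups X, Y and any two classes i, j that are ambiguous with respect to C (i.e., there exists an outcome o with Pr[f(σ)=i ∧ C(O(σ))=o] > 0 and Pr[f(σ)=j ∧ C(O(σ))=o] > 0), letting α_c^G = Pr[f(σ_G)=c] denote the base rate of class c in group G, we have μ(α_i^X/α_i^Y, α_j^X/α_j^Y) ≤ 4ε. -/
open scoped Classical
open Finset

/-- Multiplicative distance between nonnegative reals, valued in `ℝ≥0∞`. -/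
noncomputable def mdist (x y : ℝ) : ENNReal :=
  if x = 0 ∧ y = 0 then 0
  else if 0 < x ∧ 0 < y then ENNReal.ofReal (Real.log (max (x / y) (y / x)))
  else ⊤

/-- Probability of an event `E` under a finitely supported distribution `D`. -/
noncomputable def pr {S : Type} [Fintype S] (D : S → ℝ) (E : S → Prop) : ℝ :=
  ∑ σ, if E σ then D σ else 0

/-- Conditional probability `Pr[A | B]`, with the convention that it is `0`
when `Pr[B] = 0` (division by zero). -/
noncomputable def cpr {S : Type} [Fintype S] (D : S → ℝ) (A B : S → Prop) : ℝ :=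
  pr D (fun σ => A σ ∧ B σ) / pr D B

/-- `D` is a probability mass function. -/
def IsProb {S : Type} [Fintype S] (D : S → ℝ) : Prop :=
  (∀ σ, 0 ≤ D σ) ∧ ∑ σ, D σ = 1

/-- `ε`-fair treatment: conditioned on each class, the classifier's outcome
distribution is `ε`-close (multiplicatively) between any two groups. -/
def FairTreatment {S Ψ G Θ Ω : Type} [Fintype S] (D : S → ℝ) (f : S → Ψ) (g : S → G)
    (O : S → Θ) (C : Θ → Ω) (ε : ℝ) : Prop :=
  ∀ (X Y : G) (c : Ψ) (o : Ω),
    mdist (cpr D (fun σ => C (O σ) = o) (fun σ => f σ = c ∧ g σ = X))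
          (cpr D (fun σ => C (O σ) = o) (fun σ => f σ = c ∧ g σ = Y)) ≤ ENNReal.ofReal ε

/-- `ε`-predictive parity: conditioned on each outcome, the class distribution
is `ε`-close (multiplicatively) between any two groups. -/
def PredParity {S Ψ G Θ Ω : Type} [Fintype S] (D : S → ℝ) (f : S → Ψ) (g : S → G)
    (O : S → Θ) (C : Θ → Ω) (ε : ℝ) : Prop :=
  ∀ (X Y : G) (o : Ω) (c : Ψ),
    mdist (cpr D (fun σ => f σ = c) (fun σ => C (O σ) = o ∧ g σ = X))
          (cpr D (fun σ => f σ = c) (fun σ => C (O σ) = o ∧ g σ = Y)) ≤ ENNReal.ofReal ε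

/-- Classes `i` and `j` are ambiguous w.r.t. classifier `C`: some outcome arises
with positive probability together with each of the two classes. -/
def Ambiguous {S Ψ Θ Ω : Type} [Fintype S] (D : S → ℝ) (f : S → Ψ)
    (O : S → Θ) (C : Θ → Ω) (i j : Ψ) : Prop :=
  ∃ o : Ω, 0 < pr D (fun σ => f σ = i ∧ C (O σ) = o) ∧
           0 < pr D (fun σ => f σ = j ∧ C (O σ) = o)

/-- Subgroup perfect prediction: there is a proper nonempty subset `ψ` of classes
such that the outcome distributions conditioned on `ψ` and on its complement
have disjoint supports. -/
def SubgroupPP {S Ψ Θ Ω : Type} [Fintype S] (D : S → ℝ) (f : S → Ψ)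
    (O : S → Θ) (C : Θ → Ω) : Prop :=
  ∃ ψ : Set Ψ, ψ.Nonempty ∧ ψ ≠ Set.univ ∧
    ∀ o : Ω, ¬ (0 < pr D (fun σ => f σ ∈ ψ ∧ C (O σ) = o) ∧
                0 < pr D (fun σ => f σ ∉ ψ ∧ C (O σ) = o))


/-!
Write `α_c^G = Pr[f = c | G]` for base rates and `β^G = Pr[C = o | G]` for the rate of an outcome
`o`. Bayes' rule gives `α_c^G / β^G = Pr[f = c | C = o, G] / Pr[C = o | f = c, G]`, whose numerator
is controlled across groups by predictive parity and whose denominator by fair treatment, as long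
as all these probabilities are positive. Hence `α_c^X / α_c^Y` is within `2ε` of `β^X / β^Y` for
every class `c` occurring together with `o`. Taking for `o` an outcome witnessing the ambiguity of
`i` and `j`, the triangle inequality puts the two base rate ratios within `4ε` of each other.
Positivity spreads from one group to all of them through fair treatment, since a finite
multiplicative distance cannot separate a zero from a positive probability.
-/

lemma mdist_comm (x y : ℝ) : mdist x y = mdist y x := by
  simp only [mdist, and_comm, max_comm]

lemma mdist_ne_top_iff {x y : ℝ} : mdist x y ≠ ⊤ ↔ (x = 0 ∧ y = 0) ∨ (0 < x ∧ 0 < y) := by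
  unfold mdist
  split_ifs <;> simp_all

lemma mdist_eq_ofReal_abs_log_sub_log {x y : ℝ} (hx : 0 < x) (hy : 0 < y) :
    mdist x y = ENNReal.ofReal |Real.log x - Real.log y| := by
  rw [mdist, if_neg fun h => hx.ne' h.1, if_pos ⟨hx, hy⟩,
    Real.strictMonoOn_log.monotoneOn.map_max (div_pos hx hy) (div_pos hy hx),
    ← Real.log_div hx.ne' hy.ne', abs_eq_max_neg, ← Real.log_inv, inv_div]

lemma mdist_le_ofReal_iff {x y ε : ℝ} (hx : 0 < x) (hy : 0 < y) (hε : 0 ≤ ε) :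
    mdist x y ≤ ENNReal.ofReal ε ↔ |Real.log x - Real.log y| ≤ ε := by
  rw [mdist_eq_ofReal_abs_log_sub_log hx hy, ENNReal.ofReal_le_ofReal_iff hε]

lemma mdist_triangle (x y z : ℝ) : mdist x z ≤ mdist x y + mdist y z := by
  by_cases hxy : mdist x y = ⊤
  · simp [hxy]
  by_cases hyz : mdist y z = ⊤
  · simp [hyz]
  rcases mdist_ne_top_iff.1 hxy with ⟨rfl, rfl⟩ | ⟨hx, hy⟩ <;>
    rcases mdist_ne_top_iff.1 hyz with ⟨hy', rfl⟩ | ⟨hy', hz⟩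
  · simp [mdist]
  · exact absurd hy' (lt_irrefl 0)
  · exact absurd hy' hy.ne'
  · rw [mdist_eq_ofReal_abs_log_sub_log hx hy, mdist_eq_ofReal_abs_log_sub_log hy hz,
      mdist_eq_ofReal_abs_log_sub_log hx hz, ← ENNReal.ofReal_add (abs_nonneg _) (abs_nonneg _)]
    exact ENNReal.ofReal_le_ofReal (abs_sub_le _ _ _)

section Probability

variable {S : Type} [Fintype S] {D : S → ℝ}

lemma pr_nonneg (hD : ∀ σ, 0 ≤ D σ) (E : S → Prop) : 0 ≤ pr D E :=
  Finset.sum_nonneg fun σ _ => ite_nonneg (hD σ) le_rfl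

lemma pr_mono (hD : ∀ σ, 0 ≤ D σ) {A B : S → Prop} (h : ∀ σ, A σ → B σ) :
    pr D A ≤ pr D B :=
  Finset.sum_le_sum fun σ _ => by split_ifs <;> simp_all

lemma pr_congr {A B : S → Prop} (h : ∀ σ, A σ ↔ B σ) : pr D A = pr D B :=
  congrArg (pr D) (funext fun σ => propext (h σ))

lemma pr_pos_iff (hD : ∀ σ, 0 ≤ D σ) {E : S → Prop} : 0 < pr D E ↔ ∃ σ, E σ ∧ 0 < D σ := by
  simp only [pr, Finset.sum_pos_iff_of_nonneg fun σ _ => ite_nonneg (hD σ) le_rfl,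
    Finset.mem_univ, true_and]
  exact exists_congr fun σ => by split_ifs with hE <;> simp [hE]

lemma cpr_pos_iff (hD : ∀ σ, 0 ≤ D σ) {A B : S → Prop} :
    0 < cpr D A B ↔ 0 < pr D (fun σ => A σ ∧ B σ) := by
  refine ⟨fun h => (pr_nonneg hD _).lt_of_ne fun h0 => ?_,
    fun h => div_pos h (h.trans_le (pr_mono hD fun _ hσ => hσ.2))⟩
  simp [cpr, ← h0] at h

lemma log_cpr (hD : ∀ σ, 0 ≤ D σ) {A B : S → Prop} (h : 0 < pr D (fun σ => A σ ∧ B σ)) :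
    Real.log (cpr D A B) = Real.log (pr D (fun σ => A σ ∧ B σ)) - Real.log (pr D B) :=
  Real.log_div h.ne' (h.trans_le (pr_mono hD fun _ hσ => hσ.2)).ne'

end Probability

section Fairness

variable {S Ψ G Θ Ω : Type} [Fintype S] {D : S → ℝ} {f : S → Ψ} {g : S → G} {O : S → Θ}
  {C : Θ → Ω} {ε : ℝ}

lemma FairTreatment.pr_pos (hft : FairTreatment D f g O C ε) (hD : ∀ σ, 0 ≤ D σ) {c : Ψ}
    {o : Ω} (hco : 0 < pr D (fun σ => f σ = c ∧ C (O σ) = o)) (Z : G) :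
    0 < pr D (fun σ => C (O σ) = o ∧ f σ = c ∧ g σ = Z) := by
  obtain ⟨σ₀, ⟨hc, ho⟩, hσ₀⟩ := (pr_pos_iff hD).1 hco
  have h₀ : 0 < cpr D (fun σ => C (O σ) = o) (fun σ => f σ = c ∧ g σ = g σ₀) :=
    (cpr_pos_iff hD).2 ((pr_pos_iff hD).2 ⟨σ₀, ⟨ho, hc, rfl⟩, hσ₀⟩)
  have hZ := mdist_ne_top_iff.1 (ne_top_of_le_ne_top ENNReal.ofReal_ne_top (hft Z (g σ₀) c o))
  exact (cpr_pos_iff hD).1 (hZ.resolve_left fun h => h₀.ne' h.2).1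

lemma mdist_base_rate_ratio_outcome_rate_ratio_le (hD : ∀ σ, 0 ≤ D σ) (hε : 0 ≤ ε)
    (hft : FairTreatment D f g O C ε) (hpp : PredParity D f g O C ε) {c : Ψ} {o : Ω}
    (hco : 0 < pr D (fun σ => f σ = c ∧ C (O σ) = o)) (X Y : G) :
    mdist (cpr D (fun σ => f σ = c) (fun σ => g σ = X) /
             cpr D (fun σ => f σ = c) (fun σ => g σ = Y))
          (cpr D (fun σ => C (O σ) = o) (fun σ => g σ = X) /
             cpr D (fun σ => C (O σ) = o) (fun σ => g σ = Y))
      ≤ ENNReal.ofReal (2 * ε) := by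
  have hn := hft.pr_pos hD hco
  have hswap (Z : G) : pr D (fun σ => f σ = c ∧ C (O σ) = o ∧ g σ = Z) =
      pr D (fun σ => C (O σ) = o ∧ f σ = c ∧ g σ = Z) :=
    pr_congr fun _ => and_left_comm
  have ha (Z : G) : 0 < pr D (fun σ => f σ = c ∧ g σ = Z) :=
    (hn Z).trans_le (pr_mono hD fun _ h => h.2)
  have hm (Z : G) : 0 < pr D (fun σ => C (O σ) = o ∧ g σ = Z) :=
    (hn Z).trans_le (pr_mono hD fun _ h => ⟨h.1, h.2.2⟩)
  have hft' := (mdist_le_ofReal_iff ((cpr_pos_iff hD).2 (hn X)) ((cpr_pos_iff hD).2 (hn Y)) hε).1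
    (hft X Y c o)
  have hpp' := (mdist_le_ofReal_iff ((cpr_pos_iff hD).2 ((hswap X).trans_gt (hn X)))
    ((cpr_pos_iff hD).2 ((hswap Y).trans_gt (hn Y))) hε).1 (hpp X Y o c)
  rw [log_cpr hD (hn X), log_cpr hD (hn Y)] at hft'
  rw [log_cpr hD ((hswap X).trans_gt (hn X)), log_cpr hD ((hswap Y).trans_gt (hn Y)), hswap X, hswap Y]
    at hpp'
  have hα (Z : G) := (cpr_pos_iff hD).2 (ha Z)
  have hβ (Z : G) := (cpr_pos_iff hD).2 (hm Z)
  rw [mdist_le_ofReal_iff (div_pos (hα X) (hα Y)) (div_pos (hβ X) (hβ Y)) (by positivity),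
    Real.log_div (hα X).ne' (hα Y).ne', Real.log_div (hβ X).ne' (hβ Y).ne',
    log_cpr hD (ha X), log_cpr hD (ha Y), log_cpr hD (hm X), log_cpr hD (hm Y)]
  rw [abs_le] at hft' hpp' ⊢
  constructor <;> linarith

end Fairness

theorem base_rate_ratio_of_ambiguous {S Ψ G Θ Ω : Type} [Fintype S]
    (D : S → ℝ) (hD : IsProb D) (f : S → Ψ) (g : S → G) (O : S → Θ) (C : Θ → Ω)
    (ε : ℝ) (hε : 0 ≤ ε)
    (hft : FairTreatment D f g O C ε) (hpp : PredParity D f g O C ε)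
    (i j : Ψ) (hamb : Ambiguous D f O C i j) (X Y : G) :
    mdist (cpr D (fun σ => f σ = i) (fun σ => g σ = X) /
             cpr D (fun σ => f σ = i) (fun σ => g σ = Y))
          (cpr D (fun σ => f σ = j) (fun σ => g σ = X) /
             cpr D (fun σ => f σ = j) (fun σ => g σ = Y))
      ≤ ENNReal.ofReal (4 * ε) := by
  obtain ⟨o, hio, hjo⟩ := hamb
  have hi := mdist_base_rate_ratio_outcome_rate_ratio_le hD.1 hε hft hpp hio X Y
  have hj := mdist_base_rate_ratio_outcome_rate_ratio_le hD.1 hε hft hpp hjo X Y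
  rw [mdist_comm] at hj
  calc _ ≤ _ + _ := mdist_triangle _
        (cpr D (fun σ => C (O σ) = o) (fun σ => g σ = X) /
          cpr D (fun σ => C (O σ) = o) (fun σ => g σ = Y)) _
    _ ≤ ENNReal.ofReal (2 * ε) + ENNReal.ofReal (2 * ε) := add_le_add hi hj
    _ = ENNReal.ofReal (4 * ε) := by
      rw [← ENNReal.ofReal_add (by positivity) (by positivity)]
      ring_nf
end

section
/- Let 0 < δ and p > 0 with e^{δ/2}p ≤ 1. In the two-action decision problem where action Safe yields utility p always, and action Risky yields expected utility e^{δ/2}p conditioned on type (o,g) and e^{−δ/2}p conditioned on type (o,g'), any strategy that plays Risky with the same probability p_r for both types achieves, for at least one of the two types, expected utility at most (1/2)(1 + e^{−δ/2}) times the optimal type-dependent utility. Moreover, the bound (1/2)(1 + e^{−δ/2}) is attained exactly at p_r = 1/2. -/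
/-! A fair strategy mixes the two pure actions with the same weight `q` on both types. On the
type where Risky is better the mixture beats the midpoint of the two payoffs only if `q > 1/2`,
and on the type where Safe is better only if `q < 1/2`; so one of the two types always gets at
most the midpoint, which is exactly what `q = 1/2` achieves on both. Since
`exp (-δ/2) * exp (δ/2) = 1`, that midpoint is `(1 + exp (-δ/2)) / 2` times the optimum on each
type. -/

open Real

lemma mix_le_midpoint_or_mix_le_midpoint {q r₁ r₂ s : ℝ} (h₁ : s ≤ r₁) (h₂ : r₂ ≤ s) :
    q * r₁ + (1 - q) * s ≤ (r₁ + s) / 2 ∨ q * r₂ + (1 - q) * s ≤ (r₂ + s) / 2 := by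
  rcases le_total q (1 / 2) with hq | hq
  · left
    nlinarith [mul_nonneg (sub_nonneg.2 hq) (sub_nonneg.2 h₁)]
  · right
    nlinarith [mul_nonneg (sub_nonneg.2 hq) (sub_nonneg.2 h₂)]

lemma half_one_add_exp_neg_mul_exp_mul (x p : ℝ) :
    1 / 2 * (1 + exp (-x)) * (exp x * p) = (exp x * p + p) / 2 := by
  rw [exp_neg]
  field_simp

theorem fair_mixed_strategy_loss_general (δ p : ℝ) (hδ : 0 < δ) (hp : 0 < p) :
    (∀ q : ℝ, 0 ≤ q → q ≤ 1 →
        q * (Real.exp (δ / 2) * p) + (1 - q) * p ≤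
            (1 / 2) * (1 + Real.exp (-δ / 2)) * (Real.exp (δ / 2) * p) ∨
        q * (Real.exp (-δ / 2) * p) + (1 - q) * p ≤
            (1 / 2) * (1 + Real.exp (-δ / 2)) * p) ∧
    ((1 / 2) * (Real.exp (δ / 2) * p) + (1 - 1 / 2) * p =
        (1 / 2) * (1 + Real.exp (-δ / 2)) * (Real.exp (δ / 2) * p) ∧
     (1 / 2) * (Real.exp (-δ / 2) * p) + (1 - 1 / 2) * p =
        (1 / 2) * (1 + Real.exp (-δ / 2)) * p) := by
  rw [neg_div, half_one_add_exp_neg_mul_exp_mul]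
  have risky_ge_safe : p ≤ exp (δ / 2) * p :=
    le_mul_of_one_le_left hp.le (one_le_exp (by positivity))
  have risky_le_safe : exp (-(δ / 2)) * p ≤ p :=
    mul_le_of_le_one_left hp.le (exp_le_one_iff.2 (by linarith))
  refine ⟨fun q _ _ => ?_, by ring, by ring⟩
  convert mix_le_midpoint_or_mix_le_midpoint (q := q) risky_ge_safe risky_le_safe using 2
  ring

theorem fair_mixed_strategy_loss (δ p : ℝ) (hδ : 0 < δ) (hp : 0 < p)
    (hle : Real.exp (δ / 2) * p ≤ 1) :
    (∀ q : ℝ, 0 ≤ q → q ≤ 1 →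
        q * (Real.exp (δ / 2) * p) + (1 - q) * p ≤
            (1 / 2) * (1 + Real.exp (-δ / 2)) * (Real.exp (δ / 2) * p) ∨
        q * (Real.exp (-δ / 2) * p) + (1 - q) * p ≤
            (1 / 2) * (1 + Real.exp (-δ / 2)) * p) ∧
    ((1 / 2) * (Real.exp (δ / 2) * p) + (1 - 1 / 2) * p =
        (1 / 2) * (1 + Real.exp (-δ / 2)) * (Real.exp (δ / 2) * p) ∧
     (1 / 2) * (Real.exp (-δ / 2) * p) + (1 - 1 / 2) * p =
        (1 / 2) * (1 + Real.exp (-δ / 2)) * p) :=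
  fair_mixed_strategy_loss_general δ p hδ hp
end

section
/- If a context P = (D, f, g, O) is ε-trivial via a partition Ψ_1,...,Ψ_m, then the classifier C that outputs the index i with f(σ) ∈ Ψ_i (computable from O(σ) by disjointness of supports) satisfies ε-predictive parity with respect to P: for all groups X,Y, indices i, and classes c, μ(Pr[f(σ_X)=c | C(O(σ_X))=i], Pr[f(σ_Y)=c | C(O(σ_Y))=i]) ≤ ε. -/
open scoped Classical
open Finset

/-! On the support of `D` the event `C (O σ) = i` is the event `P (f σ) = i`, so the
conditional probabilities in predictive parity are exactly those in triviality. When `c` lies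
outside the block `i` they are both `0`, at multiplicative distance `0`. -/

section Support

variable {S : Type} [Fintype S] {D : S → ℝ}

lemma pr_congr_of_pos (hD : ∀ σ, 0 ≤ D σ) {E E' : S → Prop}
    (h : ∀ σ, 0 < D σ → (E σ ↔ E' σ)) : pr D E = pr D E' := by
  refine Finset.sum_congr rfl fun σ _ => ?_
  rcases (hD σ).eq_or_lt with h0 | h0
  · simp [← h0]
  · simp only [h σ h0]

lemma cpr_congr_of_pos (hD : ∀ σ, 0 ≤ D σ) {A A' B B' : S → Prop}
    (hA : ∀ σ, 0 < D σ → (A σ ↔ A' σ)) (hB : ∀ σ, 0 < D σ → (B σ ↔ B' σ)) :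
    cpr D A B = cpr D A' B' := by
  unfold cpr
  rw [pr_congr_of_pos hD fun σ hσ => and_congr (hA σ hσ) (hB σ hσ), pr_congr_of_pos hD hB]

lemma cpr_eq_zero_of_disjoint {A B : S → Prop} (h : ∀ σ, A σ → ¬ B σ) : cpr D A B = 0 := by
  have hAB : pr D (fun σ => A σ ∧ B σ) = 0 :=
    Finset.sum_eq_zero fun σ _ => if_neg fun hσ => h σ hσ.1 hσ.2
  rw [cpr, hAB, zero_div]

end Support

lemma mdist_zero_zero : mdist 0 0 = 0 := by
  simp [mdist]

theorem trivial_implies_predictive_parity_general {S Ψ G Θ : Type} [Fintype S]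
    (D : S → ℝ) (hD : IsProb D) (f : S → Ψ) (g : S → G) (O : S → Θ)
    (ε : ℝ) (m : ℕ) (P : Ψ → Fin m)
    (htriv1 : ∀ (i : Fin m) (c : Ψ), P c = i → ∀ X Y : G,
        mdist (cpr D (fun σ => f σ = c) (fun σ => P (f σ) = i ∧ g σ = X))
              (cpr D (fun σ => f σ = c) (fun σ => P (f σ) = i ∧ g σ = Y))
          ≤ ENNReal.ofReal ε)
    (C : Θ → Fin m) (hC : ∀ σ, 0 < D σ → C (O σ) = P (f σ)) :
    ∀ (X Y : G) (i : Fin m) (c : Ψ),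
      mdist (cpr D (fun σ => f σ = c) (fun σ => C (O σ) = i ∧ g σ = X))
            (cpr D (fun σ => f σ = c) (fun σ => C (O σ) = i ∧ g σ = Y))
        ≤ ENNReal.ofReal ε := by
  intro X Y i c
  have hblock : ∀ Z : G,
      cpr D (fun σ => f σ = c) (fun σ => C (O σ) = i ∧ g σ = Z)
        = cpr D (fun σ => f σ = c) (fun σ => P (f σ) = i ∧ g σ = Z) := fun Z =>
    cpr_congr_of_pos hD.1 (fun _ _ => Iff.rfl) fun σ hσ => by rw [hC σ hσ]
  rw [hblock X, hblock Y]
  by_cases hc : P c = i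
  · exact htriv1 i c hc X Y
  · have hzero : ∀ Z : G,
        cpr D (fun σ => f σ = c) (fun σ => P (f σ) = i ∧ g σ = Z) = 0 := fun _ =>
      cpr_eq_zero_of_disjoint fun σ hfc hσ => hc (hfc ▸ hσ.1)
    rw [hzero X, hzero Y, mdist_zero_zero]
    exact zero_le

theorem trivial_implies_predictive_parity {S Ψ G Θ : Type} [Fintype S]
    (D : S → ℝ) (hD : IsProb D) (f : S → Ψ) (g : S → G) (O : S → Θ)
    (ε : ℝ) (m : ℕ) (P : Ψ → Fin m)
    (htriv1 : ∀ (i : Fin m) (c : Ψ), P c = i → ∀ X Y : G,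
        mdist (cpr D (fun σ => f σ = c) (fun σ => P (f σ) = i ∧ g σ = X))
              (cpr D (fun σ => f σ = c) (fun σ => P (f σ) = i ∧ g σ = Y))
          ≤ ENNReal.ofReal ε)
    (htriv2 : ∀ σ σ', 0 < D σ → 0 < D σ' → P (f σ) ≠ P (f σ') → O σ ≠ O σ')
    (C : Θ → Fin m) (hC : ∀ σ, 0 < D σ → C (O σ) = P (f σ)) :
    ∀ (X Y : G) (i : Fin m) (c : Ψ),
      mdist (cpr D (fun σ => f σ = c) (fun σ => C (O σ) = i ∧ g σ = X))
            (cpr D (fun σ => f σ = c) (fun σ => C (O σ) = i ∧ g σ = Y))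
        ≤ ENNReal.ofReal ε :=
  trivial_implies_predictive_parity_general D hD f g O ε m P htriv1 C hC
end

section
/- (Closure under post-processing.) If a classifier C1 satisfies ε-fair treatment with respect to context P = (D, f, g, O), then for any (possibly randomized) post-processing classifier C2 acting only on the output of C1, the composed classifier C2 ∘ C1 satisfies ε-fair treatment with respect to P. -/
open scoped Classical
open Finset

/-! A bound `mdist x y ≤ ε` says exactly that `x, y ≥ 0` and each is at most `exp ε` times the
other. Such two-sided linear bounds survive nonnegative linear combinations, and the outcome
probabilities of `C₂ ∘ C₁` are the combinations of those of `C₁` with weights `Pr[C₂(o₁) = o₂]`. -/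

-- `ENNReal.ofReal` sends a negative `ε` to `0`, hence `max ε 0`.
lemma mdist_le_ofReal_iff_s16 {x y ε : ℝ} :
    mdist x y ≤ ENNReal.ofReal ε ↔
      0 ≤ x ∧ 0 ≤ y ∧ x ≤ Real.exp (max ε 0) * y ∧ y ≤ Real.exp (max ε 0) * x := by
  unfold mdist
  split_ifs with hzero hpos
  · simp [hzero.1, hzero.2]
  · obtain ⟨hx, hy⟩ := hpos
    have hm : 0 < max (x / y) (y / x) := lt_max_of_lt_left (div_pos hx hy)
    rw [ENNReal.ofReal_le_ofReal_iff', ← le_max_iff, Real.log_le_iff_le_exp hm, max_le_iff,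
      div_le_iff₀ hy, div_le_iff₀ hx]
    simp [hx.le, hy.le, mul_comm]
  · simp only [top_le_iff, ENNReal.ofReal_ne_top, false_iff]
    rintro ⟨hx, hy, hxy, hyx⟩
    rcases hx.lt_or_eq with hx | rfl
    · rcases hy.lt_or_eq with hy | rfl
      · exact hpos ⟨hx, hy⟩
      · exact hx.not_ge (by simpa using hxy)
    · exact hzero ⟨rfl, le_antisymm (by simpa using hyx) hy⟩

lemma sum_mul_le_mul_sum_of_le {ι : Type*} {s : Finset ι} {w a b : ι → ℝ} {k : ℝ}
    (hw : ∀ i ∈ s, 0 ≤ w i) (hab : ∀ i ∈ s, a i ≤ k * b i) :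
    ∑ i ∈ s, w i * a i ≤ k * ∑ i ∈ s, w i * b i := by
  rw [mul_sum]
  refine sum_le_sum fun i hi => ?_
  calc w i * a i ≤ w i * (k * b i) := mul_le_mul_of_nonneg_left (hab i hi) (hw i hi)
    _ = k * (w i * b i) := mul_left_comm _ _ _

lemma mdist_sum_mul_le {ι : Type*} {s : Finset ι} {w a b : ι → ℝ} {ε : ℝ}
    (hw : ∀ i ∈ s, 0 ≤ w i) (hab : ∀ i ∈ s, mdist (a i) (b i) ≤ ENNReal.ofReal ε) :
    mdist (∑ i ∈ s, w i * a i) (∑ i ∈ s, w i * b i) ≤ ENNReal.ofReal ε := by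
  simp only [mdist_le_ofReal_iff_s16] at hab ⊢
  exact ⟨sum_nonneg fun i hi => mul_nonneg (hw i hi) (hab i hi).1,
    sum_nonneg fun i hi => mul_nonneg (hw i hi) (hab i hi).2.1,
    sum_mul_le_mul_sum_of_le hw fun i hi => (hab i hi).2.2.1,
    sum_mul_le_mul_sum_of_le hw fun i hi => (hab i hi).2.2.2⟩

theorem fair_treatment_post_processing_general {S Ψ G Θ Ω₁ Ω₂ : Type}
    [Fintype S] [Fintype Ω₁] [Fintype Ω₂]
    (D : S → ℝ) (f : S → Ψ) (g : S → G) (O : S → Θ)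
    (C₁ : Θ → Ω₁) (ε : ℝ) (hft : FairTreatment D f g O C₁ ε)
    -- randomized post-processor: `M o₁ o₂ = Pr[C₂(o₁) = o₂]`
    (M : Ω₁ → Ω₂ → ℝ) (hM : ∀ o₁, (∀ o₂, 0 ≤ M o₁ o₂) ∧ ∑ o₂, M o₁ o₂ = 1) :
    ∀ (X Y : G) (c : Ψ) (o₂ : Ω₂),
      mdist (∑ o₁, M o₁ o₂ * cpr D (fun σ => C₁ (O σ) = o₁) (fun σ => f σ = c ∧ g σ = X))
            (∑ o₁, M o₁ o₂ * cpr D (fun σ => C₁ (O σ) = o₁) (fun σ => f σ = c ∧ g σ = Y))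
        ≤ ENNReal.ofReal ε :=
  fun X Y c o₂ => mdist_sum_mul_le (fun o₁ _ => (hM o₁).1 o₂) (fun o₁ _ => hft X Y c o₁)

theorem fair_treatment_post_processing {S Ψ G Θ Ω₁ Ω₂ : Type}
    [Fintype S] [Fintype Ω₁] [Fintype Ω₂]
    (D : S → ℝ) (hD : IsProb D) (f : S → Ψ) (g : S → G) (O : S → Θ)
    (C₁ : Θ → Ω₁) (ε : ℝ) (hft : FairTreatment D f g O C₁ ε)
    -- randomized post-processor: `M o₁ o₂ = Pr[C₂(o₁) = o₂]`
    (M : Ω₁ → Ω₂ → ℝ) (hM : ∀ o₁, (∀ o₂, 0 ≤ M o₁ o₂) ∧ ∑ o₂, M o₁ o₂ = 1) :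
    ∀ (X Y : G) (c : Ψ) (o₂ : Ω₂),
      mdist (∑ o₁, M o₁ o₂ * cpr D (fun σ => C₁ (O σ) = o₁) (fun σ => f σ = c ∧ g σ = X))
            (∑ o₁, M o₁ o₂ * cpr D (fun σ => C₁ (O σ) = o₁) (fun σ => f σ = c ∧ g σ = Y))
        ≤ ENNReal.ofReal ε :=
  fair_treatment_post_processing_general D f g O C₁ ε hft M hM
end

section
/- (Main theorem, direction 2.) Let ε < 3/2, let P be a classification context with k = |Ψ_P| classes, and suppose there exists a classifier C satisfying ε-fair treatment and ε/5-rational fairness with respect to P. Then P is 4(k−1)ε-trivial: there is a partition Ψ_1,...,Ψ_m of Ψ_P such that (1) for all i, all c ∈ Ψ_i, and all groups X,Y, μ(Pr[f(σ_X)=c | f(σ_X)∈Ψ_i], Pr[f(σ_Y)=c | f(σ_Y)∈Ψ_i]) ≤ 4(k−1)ε, and (2) for i ≠ j, {O(σ) | f(σ)∈Ψ_i} and {O(σ) | f(σ)∈Ψ_j} have disjoint support. -/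
open scoped Classical
open Finset

/-- Expected utility of a mixed action `d` (a distribution over actions),
conditioned on the event `B`. -/
noncomputable def EU {S Ψ A : Type} [Fintype S] [Fintype Ψ] [Fintype A]
    (D : S → ℝ) (f : S → Ψ) (u : Ψ → A → ℝ) (B : S → Prop) (d : A → ℝ) : ℝ :=
  ∑ a, d a * ∑ y, cpr D (fun σ => f σ = y) B * u y a

/-- `δ`-rational fairness: for every finite action space and `[0,1]`-valued utility,
there is a fair (group-independent, possibly mixed) strategy that is a
`δ`-approximate Nash equilibrium of the induced Bayesian decision game. -/
def RatFair {S Ψ G Θ Ω : Type} [Fintype S] [Fintype Ψ] [Fintype G] [Fintype Ω]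
    (D : S → ℝ) (f : S → Ψ) (g : S → G) (O : S → Θ) (C : Θ → Ω) (δ : ℝ) : Prop :=
  ∀ (A : Type) [Fintype A] (u : Ψ → A → ℝ), (∀ y a, 0 ≤ u y a ∧ u y a ≤ 1) →
    ∃ s : G → Ω → A → ℝ,
      (∀ X o, (∀ a, 0 ≤ s X o a) ∧ ∑ a, s X o a = 1) ∧
      (∀ X Y o, s X o = s Y o) ∧
      (∀ X o, 0 < pr D (fun σ => g σ = X ∧ C (O σ) = o) →
        ∀ d : A → ℝ, (∀ a, 0 ≤ d a) → (∑ a, d a = 1) →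
          EU D f u (fun σ => g σ = X ∧ C (O σ) = o) d ≤
            Real.exp δ * EU D f u (fun σ => g σ = X ∧ C (O σ) = o) (s X o))

/-!
Link two classes when some observable has positive probability on both, and take the connected
components of this link graph as the parts; then (2) holds by construction.

Rational fairness with fair treatment forces `ε`-predictive parity: otherwise a bet on a class
against a suitable sure payoff admits no common strategy that is nearly optimal for both groups.
Through Bayes' rule, fair treatment and predictive parity bound the odds ratio
`Pr[x, X] Pr[y, Y] / (Pr[x, Y] Pr[y, X])` of linked classes by `e^{4ε}`. Along a path of at most
`k - 1` links these bounds multiply to `e^{4(k-1)ε}`, and summing over a part gives (1). A class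
of probability zero has conditional probability `0` in every group.
-/

section Probability

variable {S : Type} [Fintype S] {D : S → ℝ}

lemma pr_pos (hD : ∀ σ, 0 ≤ D σ) {E : S → Prop} {σ : S} (hσ : 0 < D σ) (hE : E σ) :
    0 < pr D E := by
  refine hσ.trans_le ?_
  unfold pr
  simpa [hE] using single_le_sum (f := fun τ => if E τ then D τ else 0)
    (fun τ _ => by split_ifs <;> simp [hD τ]) (mem_univ σ)

lemma pr_eq_zero {E : S → Prop} (h : ∀ σ, E σ → D σ = 0) : pr D E = 0 :=
  sum_eq_zero fun σ _ => by split_ifs with hE; exacts [h σ hE, rfl]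

lemma cpr_nonneg (hD : ∀ σ, 0 ≤ D σ) (A B : S → Prop) : 0 ≤ cpr D A B :=
  div_nonneg (pr_nonneg hD _) (pr_nonneg hD _)

lemma cpr_le_one (hD : ∀ σ, 0 ≤ D σ) (A B : S → Prop) : cpr D A B ≤ 1 :=
  div_le_one_of_le₀ (pr_mono hD fun _ h => h.2) (pr_nonneg hD _)

lemma cpr_congr {A B B' : S → Prop} (h : ∀ σ, B σ ↔ B' σ) : cpr D A B = cpr D A B' := by
  rw [cpr, cpr, pr_congr h, pr_congr fun σ => and_congr_right' (h σ)]

lemma cpr_eq_zero {A B : S → Prop} (h : ∀ σ, A σ → B σ → D σ = 0) : cpr D A B = 0 := by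
  rw [cpr, pr_eq_zero fun σ hσ => h σ hσ.1 hσ.2, zero_div]

variable {Ψ : Type} [Fintype Ψ]

lemma sum_pr_fiber (f : S → Ψ) (B : S → Prop) :
    ∑ y, pr D (fun σ => f σ = y ∧ B σ) = pr D B := by
  unfold pr
  rw [sum_comm]
  refine sum_congr rfl fun σ _ => ?_
  by_cases hB : B σ <;> simp [hB]

lemma pr_comp_and_eq_sum (f : S → Ψ) (p : Ψ → Prop) (B : S → Prop) :
    pr D (fun σ => p (f σ) ∧ B σ) = ∑ x ∈ univ.filter p, pr D (fun σ => f σ = x ∧ B σ) := by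
  rw [← sum_pr_fiber f, sum_filter]
  refine sum_congr rfl fun x _ => ?_
  split_ifs with hx
  · exact pr_congr fun σ => ⟨fun h => ⟨h.1, h.2.2⟩, fun h => ⟨h.1, h.1 ▸ hx, h.2⟩⟩
  · exact pr_eq_zero fun σ h => absurd (h.1 ▸ h.2.1) hx

lemma sum_cpr_fiber (f : S → Ψ) {B : S → Prop} (hB : 0 < pr D B) :
    ∑ y, cpr D (fun σ => f σ = y) B = 1 := by
  unfold cpr
  rw [← sum_div, sum_pr_fiber, div_self hB.ne']

end Probability

lemma mdist_le_ofReal {x y K : ℝ} (hx : 0 < x) (hy : 0 < y)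
    (hxy : x ≤ Real.exp K * y) (hyx : y ≤ Real.exp K * x) : mdist x y ≤ ENNReal.ofReal K := by
  rw [mdist, if_neg fun h => hx.ne' h.1, if_pos ⟨hx, hy⟩]
  refine ENNReal.ofReal_le_ofReal
    ((Real.log_le_iff_le_exp (lt_max_of_lt_left (div_pos hx hy))).2 ?_)
  exact max_le ((div_le_iff₀ hy).2 (by linarith)) ((div_le_iff₀ hx).2 (by linarith))

lemma pos_of_mdist_le_ofReal {x y K : ℝ} (hx : 0 < x) (hy : 0 ≤ y)
    (h : mdist x y ≤ ENNReal.ofReal K) : 0 < y := by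
  refine hy.lt_of_ne fun hy0 => ?_
  rw [mdist, ← hy0, if_neg fun h => hx.ne' h.1, if_neg fun h => lt_irrefl 0 h.2, top_le_iff] at h
  exact ENNReal.ofReal_ne_top h

lemma le_exp_mul_of_mdist_le_ofReal {x y K : ℝ} (hx : 0 < x) (hy : 0 < y) (hK : 0 ≤ K)
    (h : mdist x y ≤ ENNReal.ofReal K) : y ≤ Real.exp K * x := by
  rw [mdist, if_neg fun h => hx.ne' h.1, if_pos ⟨hx, hy⟩, ENNReal.ofReal_le_ofReal_iff hK,
    Real.log_le_iff_le_exp (lt_max_of_lt_left (div_pos hx hy))] at h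
  exact (div_le_iff₀ hx).1 ((le_max_right _ _).trans h)

section OddsRatio

variable {V G : Type*} (N : V → G → ℝ)

def OddsRatioLE (K : ℝ) (x y : V) : Prop :=
  ∀ X Y : G, N x X * N y Y ≤ Real.exp K * (N x Y * N y X)

variable {N}

lemma oddsRatioLE_refl (x : V) : OddsRatioLE N 0 x x := fun X Y => by
  rw [Real.exp_zero, one_mul, mul_comm]

lemma OddsRatioLE.mono {K K' : ℝ} {x y : V} (hN : ∀ v Z, 0 ≤ N v Z) (hK : K ≤ K')
    (h : OddsRatioLE N K x y) : OddsRatioLE N K' x y := fun X Y =>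
  (h X Y).trans (mul_le_mul_of_nonneg_right (Real.exp_le_exp.2 hK)
    (mul_nonneg (hN x Y) (hN y X)))

lemma OddsRatioLE.trans {a b : ℝ} {x y z : V} (hN : ∀ v Z, 0 ≤ N v Z) (hz : ∀ Z, 0 < N z Z)
    (hxz : OddsRatioLE N a x z) (hzy : OddsRatioLE N b z y) : OddsRatioLE N (a + b) x y := by
  intro X Y
  refine le_of_mul_le_mul_right ?_ (mul_pos (hz X) (hz Y))
  calc N x X * N y Y * (N z X * N z Y)
      = (N x X * N z Y) * (N z X * N y Y) := by ring
    _ ≤ (Real.exp a * (N x Y * N z X)) * (Real.exp b * (N z Y * N y X)) :=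
        mul_le_mul (hxz X Y) (hzy X Y) (mul_nonneg (hN z X) (hN y Y))
          (mul_nonneg (Real.exp_pos a).le (mul_nonneg (hN x Y) (hN z X)))
    _ = Real.exp (a + b) * (N x Y * N y X) * (N z X * N z Y) := by rw [Real.exp_add]; ring

variable {H : SimpleGraph V} {δ : ℝ}

lemma oddsRatioLE_of_walk (hN : ∀ v Z, 0 ≤ N v Z) (hpos : ∀ u v, H.Adj u v → ∀ Z, 0 < N v Z)
    (hadj : ∀ u v, H.Adj u v → OddsRatioLE N δ u v) {x y : V} :
    (w : H.Walk x y) → OddsRatioLE N (w.length * δ) x y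
  | .nil => by simpa using oddsRatioLE_refl x
  | .cons h w => by
    rw [SimpleGraph.Walk.length_cons, Nat.cast_succ, add_one_mul, add_comm]
    exact (hadj _ _ h).trans hN (hpos _ _ h) (oddsRatioLE_of_walk hN hpos hadj w)

lemma oddsRatioLE_of_reachable [Fintype V] (hN : ∀ v Z, 0 ≤ N v Z) (hδ : 0 ≤ δ)
    (hpos : ∀ u v, H.Adj u v → ∀ Z, 0 < N v Z) (hadj : ∀ u v, H.Adj u v → OddsRatioLE N δ u v)
    {x y : V} (h : H.Reachable x y) : OddsRatioLE N ((Fintype.card V - 1) * δ) x y := by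
  obtain ⟨w⟩ := h
  refine (oddsRatioLE_of_walk hN hpos hadj w.toPath.1).mono hN
    (mul_le_mul_of_nonneg_right ?_ hδ)
  have := w.toPath.2.length_lt
  rw [le_sub_iff_add_le]
  exact_mod_cast this

end OddsRatio

lemma div_sum_le_exp_mul_div_sum {ι : Type*} {T : Finset ι} {a b : ι → ℝ} {c : ι} {K : ℝ}
    (hb : 0 < ∑ x ∈ T, b x) (ha : 0 < ∑ x ∈ T, a x)
    (h : ∀ x ∈ T, a c * b x ≤ Real.exp K * (b c * a x)) :
    a c / ∑ x ∈ T, a x ≤ Real.exp K * (b c / ∑ x ∈ T, b x) := by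
  rw [← mul_div_assoc, div_le_div_iff₀ ha hb, mul_sum, mul_sum]
  exact sum_le_sum fun x hx => by linarith [h x hx]

/- With `u = exp (ε / 10)` this reads `1 ≤ 2u³ - u⁵`, which holds for `1 ≤ u ≤ 20/17`;
this is where `ε < 3/2` enters. -/
lemma exp_div_five_le_exp_div_two_mul {ε : ℝ} (hε0 : 0 ≤ ε) (hε : ε < 3 / 2) :
    Real.exp (ε / 5) ≤ Real.exp (ε / 2) * (2 - Real.exp (ε / 5)) := by
  set u := Real.exp (ε / 10)
  have hu1 : 1 ≤ u := Real.one_le_exp (by linarith)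
  have hu2 : u ≤ 20 / 17 := by
    have h := Real.add_one_le_exp (-(ε / 10))
    have h' : Real.exp (-(ε / 10)) * u = 1 := by rw [← Real.exp_add]; simp
    nlinarith
  have h5 : Real.exp (ε / 5) = u ^ 2 := by rw [← Real.exp_nat_mul]; ring_nf
  have h2 : Real.exp (ε / 2) = u ^ 5 := by rw [← Real.exp_nat_mul]; ring_nf
  rw [h5, h2]
  have hq : u ^ 4 + u ^ 3 - u ^ 2 - u - 1 ≤ 0 := by
    nlinarith [mul_le_mul hu2 hu2 (by linarith) (by linarith)]
  nlinarith [mul_nonneg (sub_nonneg.2 hu1) (neg_nonneg.2 hq), sq_nonneg u]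

lemma mul_sq_le_of_approx_best_responses {E pX pY t a b : ℝ} (hpX : 0 < pX) (ht : 0 ≤ t)
    (ht2 : t ^ 2 = pX * pY) (hE : E ≤ 2) (hab : a + b = 1)
    (hX : t ≤ E * (a * pX + b * t)) (hY : pY ≤ E * (a * pY + b * t)) :
    pY * (2 - E) ^ 2 ≤ pX * E ^ 2 := by
  rcases ht.eq_or_lt with rfl | ht
  · have : pY = 0 := by nlinarith
    rw [this, zero_mul]
    positivity
  -- `t ^ 2 = pX * pY` turns the second inequality into the first with `pX` and `t` swapped
  have hY' : t ≤ E * (a * t + b * pX) := by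
    refine le_of_mul_le_mul_left ?_ ht
    linear_combination mul_le_mul_of_nonneg_left hY hpX.le + (1 - E * a) * ht2
  have hsum : t * (2 - E) ≤ E * pX := by linear_combination hX + hY' + E * (t + pX) * hab
  nlinarith [pow_le_pow_left₀ (by nlinarith) hsum 2]

lemma le_exp_mul_of_approx_best_responses {ε pX pY t a b : ℝ} (hε0 : 0 ≤ ε) (hε : ε < 3 / 2)
    (hpX : 0 < pX) (ht : 0 ≤ t) (ht2 : t ^ 2 = pX * pY) (hab : a + b = 1)
    (hX : t ≤ Real.exp (ε / 5) * (a * pX + b * t))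
    (hY : pY ≤ Real.exp (ε / 5) * (a * pY + b * t)) :
    pY ≤ Real.exp ε * pX := by
  have hkey := exp_div_five_le_exp_div_two_mul hε0 hε
  have hE : 0 < 2 - Real.exp (ε / 5) :=
    pos_of_mul_pos_right ((Real.exp_pos _).trans_le hkey) (Real.exp_pos _).le
  have hsq : Real.exp (ε / 5) ^ 2 ≤ Real.exp ε * (2 - Real.exp (ε / 5)) ^ 2 := by
    have hsq2 : Real.exp (ε / 2) ^ 2 = Real.exp ε := by rw [← Real.exp_nat_mul]; ring_nf
    simpa only [mul_pow, hsq2] using pow_le_pow_left₀ (Real.exp_pos _).le hkey 2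
  refine le_of_mul_le_mul_right ?_ (pow_pos hE 2)
  calc pY * (2 - Real.exp (ε / 5)) ^ 2 ≤ pX * Real.exp (ε / 5) ^ 2 :=
        mul_sq_le_of_approx_best_responses hpX ht ht2 (by linarith) hab hX hY
    _ ≤ _ := by nlinarith

lemma mul_le_pow_four_mul_of_div_le {e nxX nxY nyX nyY jxX jxY jyX jyY mX mY : ℝ}
    (he : 0 ≤ e) (hnxX : 0 < nxX) (hnxY : 0 < nxY) (hnyX : 0 < nyX) (hnyY : 0 < nyY)
    (hjxX : 0 < jxX) (hjxY : 0 < jxY) (hjyX : 0 < jyX) (hjyY : 0 < jyY)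
    (hmX : 0 < mX) (hmY : 0 < mY)
    (hqx : jxY / nxY ≤ e * (jxX / nxX)) (hqy : jyX / nyX ≤ e * (jyY / nyY))
    (hpx : jxX / mX ≤ e * (jxY / mY)) (hpy : jyY / mY ≤ e * (jyX / mX)) :
    nxX * nyY ≤ e ^ 4 * (nxY * nyX) := by
  rw [← mul_div_assoc, div_le_div_iff₀ hnxY hnxX] at hqx
  rw [← mul_div_assoc, div_le_div_iff₀ hnyX hnyY] at hqy
  rw [← mul_div_assoc, div_le_div_iff₀ hmX hmY] at hpx
  rw [← mul_div_assoc, div_le_div_iff₀ hmY hmX] at hpy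
  refine le_of_mul_le_mul_right ?_ (by positivity : 0 < jxX * jxY * jyX * jyY * mX * mY)
  calc nxX * nyY * (jxX * jxY * jyX * jyY * mX * mY)
      = (jxY * nxX) * (jyX * nyY) * ((jxX * mY) * (jyY * mX)) := by ring
    _ ≤ (e * jxX * nxY) * (e * jyY * nyX) * ((e * jxY * mX) * (e * jyX * mY)) := by
        gcongr
    _ = e ^ 4 * (nxY * nyX) * (jxX * jxY * jyX * jyY * mX * mY) := by ring

section Fairness

variable {S Ψ G Θ Ω : Type} [Fintype S] {D : S → ℝ} {f : S → Ψ} {g : S → G} {O : S → Θ}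
  {C : Θ → Ω} {ε : ℝ}

noncomputable def betUtility (c : Ψ) (t : ℝ) (y : Ψ) : Bool → ℝ
  | true => if y = c then 1 else 0
  | false => t

lemma EU_betUtility [Fintype Ψ] (c : Ψ) (t : ℝ) {B : S → Prop} (hB : 0 < pr D B)
    (d : Bool → ℝ) :
    EU D f (betUtility c t) B d = d true * cpr D (fun σ => f σ = c) B + d false * t := by
  simp only [EU, Fintype.sum_bool, betUtility, mul_ite, mul_one, mul_zero, sum_ite_eq',
    mem_univ, if_true, ← sum_mul, sum_cpr_fiber f hB, one_mul]

/- Betting on `c` pays `pX` in group `X` and `pY` in group `Y`, the sure payoff `t` is their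
geometric mean; a common strategy cannot be nearly optimal in both groups if `pY / pX` is large. -/
lemma cpr_le_exp_mul_cpr_of_ratFair [Fintype Ψ] [Fintype G] [Fintype Ω]
    (hD : ∀ σ, 0 ≤ D σ) (hε0 : 0 ≤ ε) (hε : ε < 3 / 2) (hrf : RatFair D f g O C (ε / 5))
    {X Y : G} {o : Ω} {c : Ψ}
    (hX : 0 < pr D (fun σ => g σ = X ∧ C (O σ) = o))
    (hY : 0 < pr D (fun σ => g σ = Y ∧ C (O σ) = o))
    (hpX : 0 < cpr D (fun σ => f σ = c) (fun σ => g σ = X ∧ C (O σ) = o)) :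
    cpr D (fun σ => f σ = c) (fun σ => g σ = Y ∧ C (O σ) = o)
      ≤ Real.exp ε * cpr D (fun σ => f σ = c) (fun σ => g σ = X ∧ C (O σ) = o) := by
  set pX := cpr D (fun σ => f σ = c) (fun σ => g σ = X ∧ C (O σ) = o)
  set pY := cpr D (fun σ => f σ = c) (fun σ => g σ = Y ∧ C (O σ) = o)
  have hpXY : 0 ≤ pX * pY := mul_nonneg hpX.le (cpr_nonneg hD _ _)
  set t := √(pX * pY)
  have ht1 : t ≤ 1 := Real.sqrt_le_one.2
    (mul_le_one₀ (cpr_le_one hD _ _) (cpr_nonneg hD _ _) (cpr_le_one hD _ _))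
  obtain ⟨s, hs, hfair, heq⟩ := hrf Bool (betUtility c t) fun y b => by
    cases b
    · exact ⟨Real.sqrt_nonneg _, ht1⟩
    · simp only [betUtility]; split_ifs <;> norm_num
  have hab : s X o true + s X o false = 1 := by simpa [Fintype.sum_bool] using (hs X o).2
  have hdevX := heq X o hX (fun b => if b then 0 else 1) (by simp) (by simp)
  have hdevY := heq Y o hY (fun b => if b then 1 else 0) (by simp) (by simp)
  rw [EU_betUtility c t hX, EU_betUtility c t hX] at hdevX
  rw [EU_betUtility c t hY, EU_betUtility c t hY, hfair Y X o] at hdevY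
  exact le_exp_mul_of_approx_best_responses hε0 hε hpX (Real.sqrt_nonneg _)
    (Real.sq_sqrt hpXY) hab (by simpa using hdevX) (by simpa using hdevY)

lemma pr_pos_of_fairTreatment (hD : ∀ σ, 0 ≤ D σ) (hft : FairTreatment D f g O C ε)
    {σ₀ : S} (h₀ : 0 < D σ₀) (Z : G) :
    0 < pr D (fun σ => C (O σ) = C (O σ₀) ∧ f σ = f σ₀ ∧ g σ = Z) := by
  have hpos : 0 < cpr D (fun σ => C (O σ) = C (O σ₀)) (fun σ => f σ = f σ₀ ∧ g σ = g σ₀) :=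
    div_pos (pr_pos hD h₀ ⟨rfl, rfl, rfl⟩) (pr_pos hD h₀ ⟨rfl, rfl⟩)
  have hZ := pos_of_mdist_le_ofReal hpos (cpr_nonneg hD _ _) (hft _ Z _ _)
  exact (pr_nonneg hD _).lt_of_ne fun h => by simp [cpr, ← h] at hZ

lemma predParity_of_fairTreatment_of_ratFair [Fintype Ψ] [Fintype G] [Fintype Ω]
    (hD : ∀ σ, 0 ≤ D σ) (hε0 : 0 ≤ ε) (hε : ε < 3 / 2) (hft : FairTreatment D f g O C ε)
    (hrf : RatFair D f g O C (ε / 5)) : PredParity D f g O C ε := by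
  intro X Y o c
  by_cases h : ∃ σ, 0 < D σ ∧ f σ = c ∧ C (O σ) = o
  · obtain ⟨σ₀, h₀, rfl, rfl⟩ := h
    have hpos : ∀ Z, 0 < pr D (fun σ => g σ = Z ∧ C (O σ) = C (O σ₀)) ∧
        0 < cpr D (fun σ => f σ = f σ₀) (fun σ => g σ = Z ∧ C (O σ) = C (O σ₀)) := by
      intro Z
      have hJ := pr_pos_of_fairTreatment hD hft h₀ Z
      have hM : 0 < pr D (fun σ => g σ = Z ∧ C (O σ) = C (O σ₀)) :=
        hJ.trans_le (pr_mono hD fun σ h => ⟨h.2.2, h.1⟩)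
      exact ⟨hM, div_pos (hJ.trans_eq (pr_congr fun σ => by tauto)) hM⟩
    rw [cpr_congr fun _ => and_comm, cpr_congr fun _ => and_comm (a := C _ = _)]
    exact mdist_le_ofReal (hpos X).2 (hpos Y).2
      (cpr_le_exp_mul_cpr_of_ratFair hD hε0 hε hrf (hpos Y).1 (hpos X).1 (hpos Y).2)
      (cpr_le_exp_mul_cpr_of_ratFair hD hε0 hε hrf (hpos X).1 (hpos Y).1 (hpos X).2)
  · simp only [not_exists, not_and] at h
    have hnull : ∀ Z, ∀ σ, f σ = c → C (O σ) = o ∧ g σ = Z → D σ = 0 := fun Z σ hc ho =>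
      ((hD σ).lt_or_eq.resolve_left fun hσ => (h σ hσ hc ho.1).elim).symm
    rw [cpr_eq_zero (hnull X), cpr_eq_zero (hnull Y), mdist_zero_zero]
    exact zero_le

end Fairness

section LinkGraph

variable {S Ψ G Θ Ω : Type} {D : S → ℝ} {f : S → Ψ} {g : S → G} {O : S → Θ}
  {C : Θ → Ω} {ε : ℝ}

def Linked (D : S → ℝ) (f : S → Ψ) (O : S → Θ) (x y : Ψ) : Prop :=
  ∃ σ σ', 0 < D σ ∧ 0 < D σ' ∧ f σ = x ∧ f σ' = y ∧ O σ = O σ'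

def linkGraph (D : S → ℝ) (f : S → Ψ) (O : S → Θ) : SimpleGraph Ψ :=
  SimpleGraph.fromRel (Linked D f O)

lemma Linked.symm {x y : Ψ} (h : Linked D f O x y) : Linked D f O y x :=
  let ⟨σ, σ', hσ, hσ', hx, hy, hO⟩ := h
  ⟨σ', σ, hσ', hσ, hy, hx, hO.symm⟩

lemma Linked.exists_pos {x y : Ψ} (h : Linked D f O x y) : ∃ σ, 0 < D σ ∧ f σ = x :=
  let ⟨σ, _, hσ, _, hx, _⟩ := h
  ⟨σ, hσ, hx⟩

lemma linked_of_adj {x y : Ψ} (h : (linkGraph D f O).Adj x y) : Linked D f O x y :=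
  h.2.elim id Linked.symm

lemma reachable_of_linked {x y : Ψ} (h : Linked D f O x y) : (linkGraph D f O).Reachable x y := by
  by_cases hxy : x = y
  · exact hxy ▸ SimpleGraph.Reachable.refl x
  · exact SimpleGraph.Adj.reachable ⟨hxy, Or.inl h⟩

variable [Fintype S]

lemma pr_class_pos_of_fairTreatment (hD : ∀ σ, 0 ≤ D σ) (hft : FairTreatment D f g O C ε)
    {c : Ψ} (hc : ∃ σ, 0 < D σ ∧ f σ = c) (Z : G) : 0 < pr D (fun σ => f σ = c ∧ g σ = Z) := by
  obtain ⟨σ₀, h₀, rfl⟩ := hc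
  exact (pr_pos_of_fairTreatment hD hft h₀ Z).trans_le (pr_mono hD fun σ h => h.2)

/- Bayes' rule gives `Pr[x, Z] = Pr[x | Z, o] Pr[Z, o] / Pr[o | x, Z]` for the common observable
`o` of `x` and `y`: fair treatment controls the denominators and predictive parity the numerators,
and `Pr[Z, o]` cancels in the odds ratio. -/
lemma oddsRatioLE_of_linked (hD : ∀ σ, 0 ≤ D σ) (hε0 : 0 ≤ ε)
    (hft : FairTreatment D f g O C ε) (hpp : PredParity D f g O C ε) {x y : Ψ}
    (h : Linked D f O x y) :
    OddsRatioLE (fun x Z => pr D (fun σ => f σ = x ∧ g σ = Z)) (4 * ε) x y := by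
  obtain ⟨σ₁, σ₂, h₁, h₂, rfl, rfl, hO⟩ := h
  intro X Y
  set o := C (O σ₁)
  have hJ : ∀ σ₀, 0 < D σ₀ → C (O σ₀) = o → ∀ Z,
      0 < pr D (fun σ => C (O σ) = o ∧ f σ = f σ₀ ∧ g σ = Z) := fun σ₀ h₀ ho Z =>
    ho ▸ pr_pos_of_fairTreatment hD hft h₀ Z
  have hN : ∀ σ₀, 0 < D σ₀ → C (O σ₀) = o → ∀ Z, 0 < pr D (fun σ => f σ = f σ₀ ∧ g σ = Z) :=
    fun σ₀ h₀ ho Z => (hJ σ₀ h₀ ho Z).trans_le (pr_mono hD fun σ h => h.2)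
  have hM : ∀ Z, 0 < pr D (fun σ => C (O σ) = o ∧ g σ = Z) :=
    fun Z => (hJ σ₁ h₁ rfl Z).trans_le (pr_mono hD fun σ h => ⟨h.1, h.2.2⟩)
  have hFT : ∀ σ₀, 0 < D σ₀ → C (O σ₀) = o → ∀ X Y, _ := fun σ₀ h₀ ho X Y =>
    le_exp_mul_of_mdist_le_ofReal (div_pos (hJ σ₀ h₀ ho X) (hN σ₀ h₀ ho X))
      (div_pos (hJ σ₀ h₀ ho Y) (hN σ₀ h₀ ho Y)) hε0 (hft X Y (f σ₀) o)
  have hPP : ∀ σ₀, 0 < D σ₀ → C (O σ₀) = o → ∀ X Y,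
      pr D (fun σ => C (O σ) = o ∧ f σ = f σ₀ ∧ g σ = Y) / pr D (fun σ => C (O σ) = o ∧ g σ = Y)
        ≤ Real.exp ε * (pr D (fun σ => C (O σ) = o ∧ f σ = f σ₀ ∧ g σ = X) /
          pr D (fun σ => C (O σ) = o ∧ g σ = X)) := by
    intro σ₀ h₀ ho X Y
    have hcpr : ∀ Z, cpr D (fun σ => f σ = f σ₀) (fun σ => C (O σ) = o ∧ g σ = Z)
        = pr D (fun σ => C (O σ) = o ∧ f σ = f σ₀ ∧ g σ = Z) /
          pr D (fun σ => C (O σ) = o ∧ g σ = Z) :=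
      fun Z => by rw [cpr, pr_congr fun σ => and_left_comm]
    have := hpp X Y o (f σ₀)
    rw [hcpr, hcpr] at this
    exact le_exp_mul_of_mdist_le_ofReal (div_pos (hJ σ₀ h₀ ho X) (hM X))
      (div_pos (hJ σ₀ h₀ ho Y) (hM Y)) hε0 this
  have ho₂ : C (O σ₂) = o := congrArg C hO.symm
  rw [show Real.exp (4 * ε) = Real.exp ε ^ 4 by rw [← Real.exp_nat_mul]; norm_num]
  exact mul_le_pow_four_mul_of_div_le (Real.exp_pos ε).le (hN σ₁ h₁ rfl X) (hN σ₁ h₁ rfl Y)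
    (hN σ₂ h₂ ho₂ X) (hN σ₂ h₂ ho₂ Y) (hJ σ₁ h₁ rfl X) (hJ σ₁ h₁ rfl Y) (hJ σ₂ h₂ ho₂ X)
    (hJ σ₂ h₂ ho₂ Y) (hM X) (hM Y) (hFT σ₁ h₁ rfl X Y) (hFT σ₂ h₂ ho₂ Y X)
    (hPP σ₁ h₁ rfl Y X) (hPP σ₂ h₂ ho₂ X Y)

end LinkGraph

lemma mdist_cpr_le_of_oddsRatioLE {S Ψ G ι : Type} [Fintype S] [Fintype Ψ] {D : S → ℝ}
    {f : S → Ψ} {g : S → G} (hD : ∀ σ, 0 ≤ D σ) (P : Ψ → ι) {c : Ψ} {K : ℝ}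
    (hc : ∀ Z, 0 < pr D (fun σ => f σ = c ∧ g σ = Z))
    (hodds : ∀ x, P x = P c → OddsRatioLE (fun x Z => pr D (fun σ => f σ = x ∧ g σ = Z)) K c x)
    (X Y : G) :
    mdist (cpr D (fun σ => f σ = c) (fun σ => P (f σ) = P c ∧ g σ = X))
      (cpr D (fun σ => f σ = c) (fun σ => P (f σ) = P c ∧ g σ = Y)) ≤ ENNReal.ofReal K := by
  have hval : ∀ Z, cpr D (fun σ => f σ = c) (fun σ => P (f σ) = P c ∧ g σ = Z)
      = pr D (fun σ => f σ = c ∧ g σ = Z) /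
        ∑ x ∈ univ.filter (P · = P c), pr D (fun σ => f σ = x ∧ g σ = Z) := fun Z => by
    rw [cpr, pr_comp_and_eq_sum f (P · = P c)]
    congr 1
    exact pr_congr fun σ => ⟨fun h => ⟨h.1, h.2.2⟩, fun h => ⟨h.1, h.1 ▸ rfl, h.2⟩⟩
  have hsum : ∀ Z, 0 < ∑ x ∈ univ.filter (P · = P c), pr D (fun σ => f σ = x ∧ g σ = Z) :=
    fun Z => sum_pos' (fun x _ => pr_nonneg hD _) ⟨c, by simp, hc Z⟩
  rw [hval, hval]
  exact mdist_le_ofReal (div_pos (hc X) (hsum X)) (div_pos (hc Y) (hsum Y))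
    (div_sum_le_exp_mul_div_sum (hsum Y) (hsum X) fun x hx => hodds x (mem_filter.1 hx).2 X Y)
    (div_sum_le_exp_mul_div_sum (hsum X) (hsum Y) fun x hx => hodds x (mem_filter.1 hx).2 Y X)

theorem main_theorem_direction_two {S Ψ G Θ Ω : Type}
    [Fintype S] [Fintype Ψ] [Fintype G] [Fintype Ω]
    (D : S → ℝ) (hD : IsProb D) (f : S → Ψ) (g : S → G) (O : S → Θ) (C : Θ → Ω)
    (ε : ℝ) (hε0 : 0 ≤ ε) (hε : ε < 3 / 2)
    (hft : FairTreatment D f g O C ε) (hrf : RatFair D f g O C (ε / 5)) :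
    ∃ (m : ℕ) (P : Ψ → Fin m), Function.Surjective P ∧
      -- (1): base rates conditioned on each part are 4(k−1)ε-close between groups
      (∀ (i : Fin m) (c : Ψ), P c = i → ∀ X Y : G,
        mdist (cpr D (fun σ => f σ = c) (fun σ => P (f σ) = i ∧ g σ = X))
              (cpr D (fun σ => f σ = c) (fun σ => P (f σ) = i ∧ g σ = Y))
          ≤ ENNReal.ofReal (4 * ((Fintype.card Ψ : ℝ) - 1) * ε)) ∧
      -- (2): observables of distinct parts have disjoint supports
      (∀ σ σ', 0 < D σ → 0 < D σ' → P (f σ) ≠ P (f σ') → O σ ≠ O σ') := by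
  have hD₀ := hD.1
  have hpp := predParity_of_fairTreatment_of_ratFair hD₀ hε0 hε hft hrf
  set H := linkGraph D f O
  have hodds : ∀ x y, H.Reachable x y → OddsRatioLE (fun x Z => pr D (fun σ => f σ = x ∧ g σ = Z))
      (4 * ((Fintype.card Ψ : ℝ) - 1) * ε) x y := fun x y h => by
    rw [show 4 * ((Fintype.card Ψ : ℝ) - 1) * ε = (Fintype.card Ψ - 1) * (4 * ε) by ring]
    exact oddsRatioLE_of_reachable (fun _ _ => pr_nonneg hD₀ _) (by positivity)
      (fun _ _ huv => pr_class_pos_of_fairTreatment hD₀ hft (linked_of_adj huv).symm.exists_pos)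
      (fun _ _ huv => oddsRatioLE_of_linked hD₀ hε0 hft hpp (linked_of_adj huv)) h
  let e := Fintype.equivFin H.ConnectedComponent
  refine ⟨_, fun c => e (H.connectedComponentMk c), e.surjective.comp Quot.mk_surjective,
    ?_, ?_⟩
  · rintro _ c rfl X Y
    by_cases hc : ∃ σ, 0 < D σ ∧ f σ = c
    · exact mdist_cpr_le_of_oddsRatioLE hD₀ _ (pr_class_pos_of_fairTreatment hD₀ hft hc)
        (fun x (hx : e (H.connectedComponentMk x) = e (H.connectedComponentMk c)) =>
          hodds c x (SimpleGraph.ConnectedComponent.exact (e.injective hx)).symm) X Y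
    · have hnull : ∀ σ, f σ = c → D σ = 0 := fun σ hσ =>
        ((hD₀ σ).lt_or_eq.resolve_left fun hpos => hc ⟨σ, hpos, hσ⟩).symm
      rw [cpr_eq_zero fun σ hσ _ => hnull σ hσ, cpr_eq_zero fun σ hσ _ => hnull σ hσ,
        mdist_zero_zero]
      exact zero_le
  · rintro σ σ' hσ hσ' hne hO
    exact hne (congrArg e (SimpleGraph.ConnectedComponent.sound
      (reachable_of_linked ⟨σ, σ', hσ, hσ', rfl, rfl, hO⟩)))
end
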